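/- For every odd integer k ≥ 3, no k-extended sun is S-perfect. -/

import Mathlib

open SimpleGraph

/-- A set `T` of vertices is *S-independent* in `G` if any two distinct vertices of `T`
are at distance at least 3 in `G` (equivalently, no two of them lie in a common star
subgraph of `G`): they are non-adjacent and have no common neighbor. -/
def SimpleGraph.SIndepSet {V : Type*} (G : SimpleGraph V) (T : Set V) : Prop :=
  ∀ u ∈ T, ∀ w ∈ T, u ≠ w → ¬ G.Adj u w ∧ ∀ x : V, ¬ (G.Adj u x ∧ G.Adj x w)

/-- `D` is a dominating set of `G`: every vertex is in `D` or adjacent to a vertex of `D`. -/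
def SimpleGraph.DominatingSet {V : Type*} (G : SimpleGraph V) (D : Finset V) : Prop :=
  ∀ v : V, v ∈ D ∨ ∃ d ∈ D, G.Adj d v

/-- `α_S(G)`: the maximum size of an S-independent set of vertices of `G`. -/
noncomputable def alphaS {V : Type*} (G : SimpleGraph V) : ℕ :=
  sSup {n | ∃ T : Finset V, G.SIndepSet ↑T ∧ T.card = n}

/-- `θ_S(G)`: the domination number of `G`, i.e. the minimum size of a dominating set
(equivalently, the minimum number of stars needed to cover all vertices of `G`). -/
noncomputable def thetaS {V : Type*} (G : SimpleGraph V) : ℕ :=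
  sInf {n | ∃ D : Finset V, G.DominatingSet D ∧ D.card = n}

/-- `G` is *S-perfect* if `α_S(H) = θ_S(H)` for every induced subgraph `H` of `G`
(induced on any subset of the vertices). -/
def SPerfect {V : Type*} (G : SimpleGraph V) : Prop :=
  ∀ s : Set V, alphaS (G.induce s) = thetaS (G.induce s)

/-- `G` is a *k-extended sun* (`k ≥ 3`): its vertex set is partitioned into
`{v 0, …, v (k-1)}` and nonempty pairwise disjoint sets `A 0, …, A (k-1)` such that
`v 0 v 1 … v (k-1) v 0` is a cycle in `G`, each `A i` induces a complete subgraph,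
every vertex of `A i` is adjacent to `v i` and `v (i+1)` (indices mod `k`) and to
no other `v j`, there are no edges between distinct `A i` and `A j`, and every
vertex of every `A i` is simplicial in `G`. -/
def IsExtendedSun {V : Type*} (G : SimpleGraph V) (k : ℕ) : Prop :=
  ∃ hk : 3 ≤ k,
    haveI : NeZero k := ⟨by omega⟩
    ∃ (v : Fin k → V) (A : Fin k → Set V),
      Function.Injective v ∧
      (∀ i j : Fin k, v i ∉ A j) ∧
      (∀ i : Fin k, (A i).Nonempty) ∧
      (∀ i j : Fin k, i ≠ j → Disjoint (A i) (A j)) ∧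
      (∀ x : V, (∃ i, x = v i) ∨ (∃ i, x ∈ A i)) ∧
      (∀ i : Fin k, G.Adj (v i) (v (i + 1))) ∧
      (∀ i : Fin k, ∀ a ∈ A i, ∀ b ∈ A i, a ≠ b → G.Adj a b) ∧
      (∀ i : Fin k, ∀ a ∈ A i, G.Adj a (v i) ∧ G.Adj a (v (i + 1))) ∧
      (∀ i j : Fin k, ∀ a ∈ A i, G.Adj a (v j) → j = i ∨ j = i + 1) ∧
      (∀ i j : Fin k, i ≠ j → ∀ a ∈ A i, ∀ b ∈ A j, ¬ G.Adj a b) ∧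
      (∀ i : Fin k, ∀ a ∈ A i, ∀ x y : V, G.Adj a x → G.Adj a y → x ≠ y → G.Adj x y)

section Aux

variable {V : Type*}

lemma isExtendedSun_induce_univ (G : SimpleGraph V) {k : ℕ}
    (h : IsExtendedSun G k) : IsExtendedSun (G.induce (Set.univ : Set V)) k := by
  obtain ⟨hk, v, A, h1, h2, h3, h4, h5, h6, h7, h8, h9, h10, h11⟩ := h
  refine ⟨hk, fun i => ⟨v i, trivial⟩, fun i => Subtype.val ⁻¹' A i,
    ?_, ?_, ?_, ?_, ?_, ?_, ?_, ?_, ?_, ?_, ?_⟩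
  · intro i j hij
    have hv : v i = v j := congrArg Subtype.val hij
    exact h1 hv
  · intro i j; exact h2 i j
  · intro i; obtain ⟨x, hx⟩ := h3 i; exact ⟨⟨x, trivial⟩, hx⟩
  · intro i j hij; exact (h4 i j hij).preimage _
  · intro x
    rcases h5 x.1 with ⟨i, hi⟩ | ⟨i, hi⟩
    · exact Or.inl ⟨i, Subtype.ext hi⟩
    · exact Or.inr ⟨i, hi⟩
  · intro i; exact h6 i
  · intro i a haA b hbA hab; exact h7 i a.1 haA b.1 hbA (fun hh => hab (Subtype.ext hh))
  · intro i a haA; exact h8 i a.1 haA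
  · intro i j a haA hadj; exact h9 i j a.1 haA hadj
  · intro i j hij a haA b hbB; exact h10 i j hij a.1 haA b.1 hbB
  · intro i a haA x y hx hy hxy; exact h11 i a.1 haA x.1 y.1 hx hy (fun hh => hxy (Subtype.ext hh))

lemma sun_indep_bound (G : SimpleGraph V) {k : ℕ}
    (h : IsExtendedSun G k) (T : Finset V) (hT : G.SIndepSet ↑T) :
    2 * T.card ≤ k := by
  classical
  obtain ⟨hk, v, A, hinj, hvA, hAne, hdisj, hcov, hcyc, hclq, hadj, hvadj, hAB, hsimp⟩ := h
  haveI : NeZero k := ⟨by omega⟩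
  have hcov' : ∀ x : V, ∃ i, x = v i ∨ x ∈ A i := by
    intro x
    rcases hcov x with ⟨i, hi⟩ | ⟨i, hi⟩
    exacts [⟨i, Or.inl hi⟩, ⟨i, Or.inr hi⟩]
  choose idx hidx using hcov'
  set P : V → Finset (Fin k) := fun t => {idx t, idx t + 1} with hP
  have hone : (1 : Fin k) ≠ 0 := by
    intro hh
    have h2 := congrArg Fin.val hh
    rw [Fin.val_one', Fin.val_zero, Nat.mod_eq_of_lt (by omega)] at h2
    omega
  have hcard : ∀ t : V, (P t).card = 2 := by
    intro t
    have hne : idx t ≠ idx t + 1 := by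
      intro hh
      rw [left_eq_add] at hh
      exact hone hh
    exact Finset.card_pair hne
  have key : ∀ u ∈ T, ∀ w ∈ T, u ≠ w → Disjoint (P u) (P w) := by
    intro u hu w hw huw
    obtain ⟨hnadj, hcn⟩ := hT u hu w hw huw
    -- core: no "closeness" relation between idx u and idx w
    have hfalse : ∀ i j : Fin k, (u = v i ∨ u ∈ A i) → (w = v j ∨ w ∈ A j) →
        (i = j ∨ i = j + 1 ∨ i + 1 = j) → False := by
      intro i j Hu Hw hij
      rcases hij with rfl | rfl | rfl
      · rcases Hu with rfl | HuA <;> rcases Hw with rfl | HwA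
        · exact huw rfl
        · exact hnadj ((hadj i w HwA).1).symm
        · exact hnadj (hadj i u HuA).1
        · exact hnadj (hclq i u HuA w HwA huw)
      · rcases Hu with rfl | HuA <;> rcases Hw with rfl | HwA
        · exact hnadj (hcyc j).symm
        · exact hnadj ((hadj j w HwA).2).symm
        · exact hcn (v (j + 1)) ⟨(hadj (j + 1) u HuA).1, (hcyc j).symm⟩
        · exact hcn (v (j + 1)) ⟨(hadj (j + 1) u HuA).1, ((hadj j w HwA).2).symm⟩
      · rcases Hu with rfl | HuA <;> rcases Hw with rfl | HwA
        · exact hnadj (hcyc i)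
        · exact hcn (v (i + 1)) ⟨hcyc i, ((hadj (i + 1) w HwA).1).symm⟩
        · exact hnadj (hadj i u HuA).2
        · exact hcn (v (i + 1)) ⟨(hadj i u HuA).2, ((hadj (i + 1) w HwA).1).symm⟩
    rw [Finset.disjoint_left]
    intro c hc hcw
    simp only [hP, Finset.mem_insert, Finset.mem_singleton] at hc hcw
    rcases hc with rfl | rfl <;> rcases hcw with hc' | hc' <;>
      exact hfalse _ _ (hidx u) (hidx w) (by
        first
        | exact Or.inl hc'
        | exact Or.inl hc'.symm
        | exact Or.inr (Or.inl hc')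
        | exact Or.inr (Or.inl hc'.symm)
        | exact Or.inr (Or.inr hc')
        | exact Or.inr (Or.inr hc'.symm)
        | exact Or.inl (add_right_cancel hc')
        | exact Or.inl (add_right_cancel hc'.symm))
  calc 2 * T.card = ∑ t ∈ T, (P t).card := by
        rw [Finset.sum_congr rfl fun t _ => hcard t, Finset.sum_const, smul_eq_mul, mul_comm]
    _ = (T.biUnion P).card := (Finset.card_biUnion key).symm
    _ ≤ (Finset.univ : Finset (Fin k)).card := Finset.card_le_univ _
    _ = k := Finset.card_fin k

lemma sun_dom_bound (G : SimpleGraph V) {k : ℕ}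
    (h : IsExtendedSun G k) (D : Finset V) (hD : G.DominatingSet D) :
    k ≤ 2 * D.card := by
  classical
  obtain ⟨hk, v, A, hinj, hvA, hAne, hdisj, hcov, hcyc, hclq, hadj, hvadj, hAB, hsimp⟩ := h
  haveI : NeZero k := ⟨by omega⟩
  choose a ha using hAne
  have hpick : ∀ i : Fin k, ∃ e, e ∈ D ∧ (e ∈ A i ∨ e = v i ∨ e = v (i + 1)) := by
    intro i
    rcases hD (a i) with hmem | ⟨e, heD, heAdj⟩
    · exact ⟨a i, hmem, Or.inl (ha i)⟩
    · rcases hcov e with ⟨m, rfl⟩ | ⟨m, hm⟩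
      · rcases hvadj i m (a i) (ha i) heAdj.symm with hh | hh
        · exact ⟨v m, heD, Or.inr (Or.inl (by rw [hh]))⟩
        · exact ⟨v m, heD, Or.inr (Or.inr (by rw [hh]))⟩
      · have hmi : m = i := by
          by_contra hne
          exact hAB m i hne e hm (a i) (ha i) heAdj
        exact ⟨e, heD, Or.inl (hmi ▸ hm)⟩
  choose d hdD hdloc using hpick
  have hfib : ∀ b ∈ D, ((Finset.univ : Finset (Fin k)).filter fun i => d i = b).card ≤ 2 := by
    intro b _
    rcases hcov b with ⟨m, rfl⟩ | ⟨m, hm⟩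
    · have hsub : ((Finset.univ : Finset (Fin k)).filter fun i => d i = v m) ⊆ {m, m - 1} := by
        intro i hi
        rw [Finset.mem_filter] at hi
        rcases hdloc i with hA | he | he
        · exact absurd (hi.2 ▸ hA) (hvA m i)
        · have : i = m := hinj (he.symm.trans hi.2)
          simp [this]
        · have h1 : i + 1 = m := hinj (he.symm.trans hi.2)
          have : i = m - 1 := by rw [← h1]; exact (add_sub_cancel_right i 1).symm
          simp [this]
      exact (Finset.card_le_card hsub).trans ((Finset.card_insert_le _ _).trans (by simp))
    · have hsub : ((Finset.univ : Finset (Fin k)).filter fun i => d i = b) ⊆ {m} := by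
        intro i hi
        rw [Finset.mem_filter] at hi
        rcases hdloc i with hA | he | he
        · have hbi : b ∈ A i := hi.2 ▸ hA
          rw [Finset.mem_singleton]
          by_contra hne
          exact (Set.disjoint_left.mp (hdisj i m hne) hbi) hm
        · rw [← hi.2, he] at hm
          exact absurd hm (hvA i m)
        · rw [← hi.2, he] at hm
          exact absurd hm (hvA (i + 1) m)
      exact (Finset.card_le_card hsub).trans (by simp)
  calc k = (Finset.univ : Finset (Fin k)).card := (Finset.card_fin k).symm
    _ ≤ 2 * D.card := Finset.card_le_mul_card_image_of_maps_to (fun i _ => hdD i) 2 hfib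

end Aux

/-- For every odd integer `k ≥ 3`, no `k`-extended sun is S-perfect. -/
theorem oddExtendedSun_not_SPerfect {V : Type*} [Fintype V] (G : SimpleGraph V)
    (k : ℕ) (hodd : Odd k) (hk : 3 ≤ k) (h : IsExtendedSun G k) :
    ¬ SPerfect G := by
  classical
  intro hS
  have hH := isExtendedSun_induce_univ G h
  set H := G.induce (Set.univ : Set V) with hHdef
  have hEq : alphaS H = thetaS H := hS Set.univ
  have hneD : {n | ∃ D : Finset ↥(Set.univ : Set V), H.DominatingSet D ∧ D.card = n}.Nonempty :=
    ⟨(Finset.univ : Finset ↥(Set.univ : Set V)).card, Finset.univ,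
      fun x => Or.inl (Finset.mem_univ x), rfl⟩
  have hθ : thetaS H ∈ {n | ∃ D : Finset ↥(Set.univ : Set V), H.DominatingSet D ∧ D.card = n} :=
    Nat.sInf_mem hneD
  obtain ⟨D, hD, hDcard⟩ := hθ
  have hneT : {n | ∃ T : Finset ↥(Set.univ : Set V), H.SIndepSet ↑T ∧ T.card = n}.Nonempty :=
    ⟨0, ∅, by simp [SimpleGraph.SIndepSet], rfl⟩
  have hbdd : BddAbove {n | ∃ T : Finset ↥(Set.univ : Set V), H.SIndepSet ↑T ∧ T.card = n} := by
    refine ⟨Fintype.card ↥(Set.univ : Set V), ?_⟩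
    rintro n ⟨T, -, rfl⟩
    exact Finset.card_le_univ T
  have hα : alphaS H ∈ {n | ∃ T : Finset ↥(Set.univ : Set V), H.SIndepSet ↑T ∧ T.card = n} :=
    Nat.sSup_mem hneT hbdd
  obtain ⟨T, hT, hTcard⟩ := hα
  have h1 := sun_indep_bound H hH T hT
  have h2 := sun_dom_bound H hH D hD
  rw [hTcard] at h1
  rw [hDcard] at h2
  rw [hEq] at h1
  obtain ⟨m, rfl⟩ := hodd
  omega
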